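/- arXiv:2207.08962 — 3 statements merged into one kernel-verified Lean document; each statement's English description precedes it below -/
import Mathlib

section
/- Let a, b be coprime positive integers and p a non-negative integer. The sum of all non-negative integers n such that ax + by = n has at most p solutions in non-negative integers equals p²a²b²/2 + p(ab - a - b)ab/2 + (a-1)(b-1)(2ab - a - b - 1)/12. -/
/-!
Fix `n` and the residue `t < b` with `a t ≡ n (mod b)`. Every representation `a x + b y = n`
has `x ≡ t (mod b)`, so the representations are `x = t + b k` for the `k` with
`a (t + b k) ≤ n`, and `numRep2 a b n ≤ p` exactly when `n < a (t + b p)`. Thus the set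
`{n | numRep2 a b n ≤ p}` is the disjoint union over `t < b` of the residue class of
`M = a (t + b p)` below `M`, whose sum times `2 b` is `M² - b M + b r - r²` with
`r = M mod b = a t mod b`. As `t` runs over `0, …, b - 1` so does `a t mod b`, and what is left
are the power sums `∑ t` and `∑ t²`.
-/

noncomputable def numRep2 (a b n : ℕ) : ℕ :=
  Set.ncard {xy : ℕ × ℕ | a * xy.1 + b * xy.2 = n}

open Finset

lemma Set.ncard_le_iff_notMem_of_isLowerSet {s : Set ℕ} (hs : IsLowerSet s) (hfin : s.Finite)
    (p : ℕ) : s.ncard ≤ p ↔ p ∉ s := by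
  constructor
  · intro hcard hp
    have := Set.ncard_le_ncard (fun k hk => hs hk hp : Set.Iic p ⊆ s) hfin
    simp only [Set.ncard_Iic_nat] at this
    omega
  · intro hp
    calc s.ncard ≤ (Set.Iio p).ncard :=
          Set.ncard_le_ncard (fun k hk => not_le.mp fun hpk => hp (hs hpk hk)) (Set.finite_Iio p)
      _ = p := Set.ncard_Iio_nat p

lemma mul_add_mul_modEq (a b t k : ℕ) : a * (t + b * k) ≡ a * t [MOD b] := by
  rw [Nat.ModEq, mul_add, mul_left_comm, Nat.add_mul_mod_self_left]

lemma eq_of_mul_modEq_mul {a b t t' : ℕ} (hab : a.Coprime b) (ht : t < b) (ht' : t' < b)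
    (h : a * t ≡ a * t' [MOD b]) : t = t' := by
  have := Nat.ModEq.cancel_left_of_coprime hab.symm h
  rwa [Nat.ModEq, Nat.mod_eq_of_lt ht, Nat.mod_eq_of_lt ht'] at this

lemma exists_lt_mul_modEq {a b : ℕ} (hb : 0 < b) (hab : a.Coprime b) (n : ℕ) :
    ∃ t < b, a * t ≡ n [MOD b] := by
  have : NeZero b := ⟨hb.ne'⟩
  refine ⟨((a : ZMod b)⁻¹ * n).val, ZMod.val_lt _, ?_⟩
  rw [← ZMod.natCast_eq_natCast_iff, Nat.cast_mul, ZMod.natCast_val, ZMod.cast_id, ← mul_assoc,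
    ZMod.mul_inv_of_unit _ ((ZMod.isUnit_iff_coprime a b).mpr hab), one_mul]

lemma setOf_mul_add_mul_eq_eq_image {a b n t : ℕ} (hab : a.Coprime b) (htb : t < b)
    (ht : a * t ≡ n [MOD b]) :
    {xy : ℕ × ℕ | a * xy.1 + b * xy.2 = n} =
      (fun k => (t + b * k, (n - a * (t + b * k)) / b)) '' {k | a * (t + b * k) ≤ n} := by
  ext ⟨x, y⟩
  simp only [Set.mem_ofPred_eq, Set.mem_image, Prod.mk.injEq]
  constructor
  · rintro rfl
    have hxt : x % b = t := by
      have hax : a * x ≡ a * t [MOD b] := by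
        rw [Nat.ModEq, Nat.add_mul_mod_self_left] at ht
        exact ht.symm
      rw [Nat.ModEq.cancel_left_of_coprime hab.symm hax, Nat.mod_eq_of_lt htb]
    have hx : t + b * (x / b) = x := hxt ▸ Nat.mod_add_div x b
    refine ⟨x / b, ?_, hx, ?_⟩ <;> rw [hx]
    · exact Nat.le_add_right _ _
    · rw [Nat.add_sub_cancel_left, Nat.mul_div_cancel_left _ (by omega)]
  · rintro ⟨k, hk, rfl, rfl⟩
    have hdvd : b ∣ n - a * (t + b * k) :=
      (Nat.modEq_iff_dvd' hk).mp ((mul_add_mul_modEq a b t k).trans ht)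
    rw [Nat.mul_div_cancel' hdvd]
    omega

lemma numRep2_le_iff {a b p n t : ℕ} (ha : 0 < a) (hb : 0 < b) (hab : a.Coprime b)
    (htb : t < b) (ht : a * t ≡ n [MOD b]) :
    numRep2 a b n ≤ p ↔ n < a * (t + b * p) := by
  have hinj : Function.Injective fun k => (t + b * k, (n - a * (t + b * k)) / b) :=
    fun k k' h => Nat.eq_of_mul_eq_mul_left hb (Nat.add_left_cancel (Prod.ext_iff.mp h).1)
  have hlower : IsLowerSet {k | a * (t + b * k) ≤ n} :=
    fun k k' hk' (hk : _ ≤ n) => show _ ≤ n from le_trans (by gcongr) hk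
  have hfin : {k | a * (t + b * k) ≤ n}.Finite :=
    (Set.finite_Iic n).subset fun k (hk : _ ≤ n) =>
      calc k ≤ b * k := Nat.le_mul_of_pos_left k hb
        _ ≤ a * (t + b * k) := (Nat.le_add_left _ t).trans (Nat.le_mul_of_pos_left _ ha)
        _ ≤ n := hk
  rw [numRep2, setOf_mul_add_mul_eq_eq_image hab htb ht, Set.ncard_image_of_injective _ hinj,
    Set.ncard_le_iff_notMem_of_isLowerSet hlower hfin, Set.mem_ofPred_eq, not_le]

def residueClassBelow (b M : ℕ) : Finset ℕ := (range M).filter (· ≡ M [MOD b])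

lemma residueClassBelow_eq_image {b : ℕ} (hb : 0 < b) (M : ℕ) :
    residueClassBelow b M = (range (M / b)).image fun j => M % b + b * j := by
  ext n
  rw [residueClassBelow, mem_filter, mem_image]
  simp only [mem_range, Nat.ModEq]
  have hM := Nat.mod_add_div M b
  constructor
  · rintro ⟨hnM, hmod⟩
    have hn := Nat.mod_add_div n b
    refine ⟨n / b, Nat.lt_of_mul_lt_mul_left (a := b) (by omega), by omega⟩
  · rintro ⟨j, hj, rfl⟩
    refine ⟨?_, by rw [Nat.add_mul_mod_self_left, Nat.mod_mod]⟩
    have := Nat.mul_lt_mul_of_pos_left hj hb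
    omega

lemma two_mul_sum_range (n : ℕ) : 2 * ∑ i ∈ range n, (i : ℤ) = n * (n - 1) := by
  induction n with
  | zero => simp
  | succ n ih => rw [sum_range_succ, mul_add, ih]; push_cast; ring

lemma six_mul_sum_range_sq (n : ℕ) :
    6 * ∑ i ∈ range n, (i : ℤ) ^ 2 = n * (n - 1) * (2 * n - 1) := by
  induction n with
  | zero => simp
  | succ n ih => rw [sum_range_succ, mul_add, ih]; push_cast; ring

lemma two_mul_mul_sum_residueClassBelow {b : ℕ} (hb : 0 < b) (M : ℕ) :
    2 * b * ∑ n ∈ residueClassBelow b M, (n : ℤ) =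
      (M : ℤ) ^ 2 - b * M + b * (M % b : ℕ) - ((M % b : ℕ) : ℤ) ^ 2 := by
  have hinj : Set.InjOn (fun j => M % b + b * j) (range (M / b) : Set ℕ) :=
    fun j _ j' _ h => Nat.eq_of_mul_eq_mul_left hb (Nat.add_left_cancel h)
  have hM : (b : ℤ) * (M / b : ℕ) + (M % b : ℕ) = M := by exact_mod_cast Nat.div_add_mod M b
  rw [residueClassBelow_eq_image hb, sum_image hinj]
  simp only [Nat.cast_add, Nat.cast_mul, sum_add_distrib, sum_const, card_range, nsmul_eq_mul,
    ← mul_sum]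
  linear_combination (M + b * (M / b : ℕ) + (M % b : ℕ) - b : ℤ) * hM
    + (b : ℤ) ^ 2 * two_mul_sum_range (M / b)

lemma sum_range_mul_mod {a b : ℕ} (hab : a.Coprime b) {β : Type*} [AddCommMonoid β]
    (f : ℕ → β) : ∑ t ∈ range b, f (a * t % b) = ∑ r ∈ range b, f r := by
  have hmaps : ∀ t ∈ range b, a * t % b ∈ range b := fun t ht =>
    mem_range.mpr (Nat.mod_lt _ (Nat.zero_lt_of_lt (mem_range.mp ht)))
  have hinj : Set.InjOn (fun t => a * t % b) (range b : Set ℕ) := fun t ht t' ht' h =>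
    eq_of_mul_modEq_mul hab (mem_range.mp ht) (mem_range.mp ht') h
  exact sum_nbij _ hmaps hinj (surjOn_of_injOn_of_card_le _ hmaps hinj le_rfl) fun _ _ => rfl

lemma setOf_numRep2_le_eq_biUnion {a b : ℕ} (ha : 0 < a) (hb : 0 < b) (hab : a.Coprime b)
    (p : ℕ) :
    {n | numRep2 a b n ≤ p} =
      ↑((range b).biUnion fun t => residueClassBelow b (a * (t + b * p))) := by
  ext n
  simp only [Set.mem_ofPred_eq, coe_biUnion, coe_range, Set.mem_Iio, Set.mem_iUnion,
    residueClassBelow, coe_filter, mem_range]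
  constructor
  · intro h
    obtain ⟨t, htb, ht⟩ := exists_lt_mul_modEq hb hab n
    exact ⟨t, htb, (numRep2_le_iff ha hb hab htb ht).mp h,
      ht.symm.trans (mul_add_mul_modEq a b t p).symm⟩
  · rintro ⟨t, htb, hlt, hmod⟩
    exact (numRep2_le_iff ha hb hab htb ((mul_add_mul_modEq a b t p).symm.trans hmod.symm)).mpr hlt

lemma pairwiseDisjoint_residueClassBelow {a b : ℕ} (hab : a.Coprime b) (p : ℕ) :
    (range b : Set ℕ).PairwiseDisjoint fun t => residueClassBelow b (a * (t + b * p)) := by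
  intro t ht t' ht' hne
  simp only [coe_range, Set.mem_Iio] at ht ht'
  refine disjoint_left.mpr fun n hn hn' => hne ?_
  obtain ⟨-, hn⟩ := mem_filter.mp hn
  obtain ⟨-, hn'⟩ := mem_filter.mp hn'
  exact eq_of_mul_modEq_mul hab ht ht' <| (mul_add_mul_modEq a b t p).symm.trans
    (hn.symm.trans (hn'.trans (mul_add_mul_modEq a b t' p)))

theorem stmt_4 (a b p : ℕ) (ha : 0 < a) (hb : 0 < b) (hab : Nat.Coprime a b) :
    12 * (∑ᶠ n ∈ {n : ℕ | numRep2 a b n ≤ p}, (n : ℤ)) =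
      6 * (p : ℤ) ^ 2 * a ^ 2 * b ^ 2
        + 6 * (p : ℤ) * ((a : ℤ) * b - a - b) * a * b
        + ((a : ℤ) - 1) * ((b : ℤ) - 1) * (2 * (a : ℤ) * b - a - b - 1) := by
  rw [setOf_numRep2_le_eq_biUnion ha hb hab, finsum_mem_coe_finset,
    sum_biUnion (pairwiseDisjoint_residueClassBelow hab p)]
  have hclass : ∀ t ∈ range b,
      2 * b * ∑ n ∈ residueClassBelow b (a * (t + b * p)), (n : ℤ) =
      (a : ℤ) ^ 2 * t ^ 2 + (2 * a ^ 2 * b * p - a * b) * t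
        + (a ^ 2 * b ^ 2 * p ^ 2 - a * b ^ 2 * p)
        + (b * (a * t % b : ℕ) - ((a * t % b : ℕ) : ℤ) ^ 2) := fun t _ => by
    rw [two_mul_mul_sum_residueClassBelow hb, show a * (t + b * p) % b = a * t % b from
      mul_add_mul_modEq a b t p]
    push_cast
    ring
  have hsum := sum_congr rfl hclass
  rw [← mul_sum, sum_add_distrib, sum_range_mul_mod hab fun r => (b * r - r ^ 2 : ℤ)] at hsum
  simp only [sum_add_distrib, sum_sub_distrib, ← mul_sum, sum_const, card_range, nsmul_eq_mul]
    at hsum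
  refine mul_left_cancel₀ (by positivity : (2 * b : ℤ) ≠ 0) ?_
  linear_combination 12 * hsum + (6 * b - 6 * a * b + 12 * a ^ 2 * b * p) * two_mul_sum_range b
    + (2 * a ^ 2 - 2) * six_mul_sum_range_sq b
end

section
/- Let a, b be coprime positive integers and p a non-negative integer. Set S_p = {n ∈ ℕ : d(n) > p}, ℓ_0(p) = pab (the least element of S_p) and g_p = (p+1)ab - a - b (the largest integer not in S_p). Then S_p is p-symmetric: for every integer x not in S_p, ℓ_0(p) + g_p - x belongs to S_p. -/
lemma repSet_finite {a b : ℕ} (ha : 0 < a) (hb : 0 < b) (n : ℕ) :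
    {xy : ℕ × ℕ | a * xy.1 + b * xy.2 = n}.Finite := by
  apply Set.Finite.subset ((Set.finite_Iic n).prod (Set.finite_Iic n))
  rintro ⟨x, y⟩ h
  simp only [Set.mem_setOf_eq] at h
  constructor <;> simp only [Set.mem_Iic] <;> nlinarith

lemma lower {a b : ℕ} (ha : 0 < a) (hb : 0 < b) (m k x0 y0 : ℕ)
    (h : a * x0 + b * y0 = m) : k < numRep2 a b (m + k * (a * b)) := by
  classical
  have hfin : {xy : ℕ × ℕ | a * xy.1 + b * xy.2 = m + k * (a * b)}.Finite :=
    repSet_finite ha hb _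
  let f : ℕ → ℕ × ℕ := fun j => (x0 + j * b, y0 + (k - j) * a)
  have hmem : ∀ j ∈ Finset.range (k + 1),
      f j ∈ {xy : ℕ × ℕ | a * xy.1 + b * xy.2 = m + k * (a * b)} := by
    intro j hj
    simp only [Finset.mem_range] at hj
    have hjk : j + (k - j) = k := by omega
    simp only [Set.mem_setOf_eq, f]
    calc a * (x0 + j * b) + b * (y0 + (k - j) * a)
        = (a * x0 + b * y0) + (j + (k - j)) * (a * b) := by ring
      _ = m + k * (a * b) := by rw [h, hjk]
  have hinj : Set.InjOn f ↑(Finset.range (k + 1)) := by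
    intro i _ j _ hij
    simp only [f, Prod.mk.injEq] at hij
    have h1 : i * b = j * b := Nat.add_left_cancel hij.1
    exact Nat.eq_of_mul_eq_mul_right hb h1
  have hsub : ↑((Finset.range (k + 1)).image f) ⊆
      {xy : ℕ × ℕ | a * xy.1 + b * xy.2 = m + k * (a * b)} := by
    intro z hz
    simp only [Finset.coe_image, Set.mem_image, Finset.mem_coe] at hz
    obtain ⟨j, hj, rfl⟩ := hz
    exact hmem j (by simpa using hj)
  have hcard : ((Finset.range (k + 1)).image f).card = k + 1 := by
    rw [Finset.card_image_of_injOn hinj, Finset.card_range]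
  have hle := Set.ncard_le_ncard hsub hfin
  rw [Set.ncard_coe_finset, hcard] at hle
  show k < Set.ncard _
  omega

lemma residue {a b : ℕ} (hb : 0 < b) (hab : Nat.Coprime a b) (n : ℕ) :
    ∃ u, u < b ∧ a * u ≡ n [MOD b] := by
  haveI : NeZero b := ⟨hb.ne'⟩
  refine ⟨((n : ZMod b) * (a : ZMod b)⁻¹).val, ZMod.val_lt _, ?_⟩
  rw [← ZMod.natCast_eq_natCast_iff]
  push_cast
  rw [ZMod.natCast_val, ZMod.cast_id]
  calc (a : ZMod b) * ((n : ZMod b) * (a : ZMod b)⁻¹)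
      = (n : ZMod b) * ((a : ZMod b) * (a : ZMod b)⁻¹) := by ring
    _ = n := by rw [ZMod.coe_mul_inv_eq_one a hab, mul_one]

lemma key {a b : ℕ} (hb : 0 < b) (hab : Nat.Coprime a b) (n : ℕ) :
    (∃ x y, a * x + b * y = n) ∨
      ∃ u w, u + 1 ≤ b ∧ 1 ≤ w ∧ a * u = n + b * w := by
  obtain ⟨u, hu, hmod⟩ := residue hb hab n
  rcases le_or_gt (a * u) n with h | h
  · left
    obtain ⟨y, hy⟩ := (Nat.modEq_iff_dvd' h).mp hmod
    refine ⟨u, y, ?_⟩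
    rw [← hy]
    exact Nat.add_sub_cancel' h
  · right
    obtain ⟨w, hw⟩ := (Nat.modEq_iff_dvd' h.le).mp hmod.symm
    have hau : a * u = n + b * w := by
      rw [← hw]; exact (Nat.add_sub_cancel' h.le).symm
    have hw1 : 1 ≤ w := by
      rcases Nat.eq_zero_or_pos w with rfl | h1
      · simp at hau; omega
      · exact h1
    exact ⟨u, w, hu, hw1, hau⟩

lemma mcnugget {a b : ℕ} (ha : 0 < a) (hb : 0 < b) (hab : Nat.Coprime a b)
    (n : ℕ) (hn : a * b < n + a + b) : ∃ x y, a * x + b * y = n := by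
  rcases key hb hab n with h | ⟨u, w, hu, hw, hau⟩
  · exact h
  · exfalso
    have h1 : a * u ≤ a * (b - 1) := Nat.mul_le_mul_left a (by omega)
    have h2 : a * (b - 1) + a = a * b := by
      have : (b - 1) + 1 = b := by omega
      calc a * (b - 1) + a = a * ((b - 1) + 1) := by ring
        _ = a * b := by rw [this]
    have h3 : b ≤ b * w := Nat.le_mul_of_pos_right b hw
    linarith

lemma sylvester {a b : ℕ} (ha : 0 < a) (hb : 0 < b) (hab : Nat.Coprime a b)
    (n : ℕ) (hn : ¬∃ x y, a * x + b * y = n) :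
    ∃ m, (∃ x y, a * x + b * y = m) ∧ m + n + a + b = a * b := by
  rcases key hb hab n with h | ⟨u, w, hu, hw, hau⟩
  · exact absurd h hn
  · refine ⟨a * (b - 1 - u) + b * (w - 1), ⟨b - 1 - u, w - 1, rfl⟩, ?_⟩
    have e1 : a * (b - 1 - u) + a * u + a = a * b := by
      have h1 : (b - 1 - u) + u + 1 = b := by omega
      calc a * (b - 1 - u) + a * u + a = a * ((b - 1 - u) + u + 1) := by ring
        _ = a * b := by rw [h1]
    have e2 : b * (w - 1) + b = b * w := by
      have h1 : (w - 1) + 1 = w := by omega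
      calc b * (w - 1) + b = b * ((w - 1) + 1) := by ring
        _ = b * w := by rw [h1]
    linarith

/-- `S_p(a,b)` is `p`-symmetric: for every integer `x ∉ S_p`,
`ℓ₀(p) + g_p - x ∈ S_p`, with `ℓ₀(p) = pab` and `g_p = (p+1)ab - a - b`. -/
theorem stmt_8 (a b p : ℕ) (ha : 0 < a) (hb : 0 < b) (hab : Nat.Coprime a b) :
    ∀ x : ℤ, (∀ m ∈ {n : ℕ | p < numRep2 a b n}, (m : ℤ) ≠ x) →
      ∃ m ∈ {n : ℕ | p < numRep2 a b n},
        (m : ℤ) = (p : ℤ) * a * b + (((p : ℤ) + 1) * a * b - a - b) - x := by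
  intro x hx
  have haZ : (1 : ℤ) ≤ (a : ℤ) := by exact_mod_cast ha
  have hbZ : (1 : ℤ) ≤ (b : ℤ) := by exact_mod_cast hb
  have habZ : (a : ℤ) + b ≤ (a : ℤ) * b + 1 := by nlinarith
  rcases lt_or_ge x ((p : ℤ) * a * b) with hcase | hcase
  · -- x < p*a*b
    have h0 : (0 : ℤ) ≤ (p : ℤ) * a * b - x + a * b - a - b := by linarith
    set m' : ℕ := ((p : ℤ) * a * b - x + a * b - a - b).toNat with hm'def
    have hm' : (m' : ℤ) = (p : ℤ) * a * b - x + a * b - a - b := by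
      rw [hm'def]; exact Int.toNat_of_nonneg h0
    have hlt : a * b < m' + a + b := by
      have : (a * b : ℤ) < (m' : ℤ) + a + b := by rw [hm']; linarith
      exact_mod_cast this
    obtain ⟨x0, y0, hxy⟩ := mcnugget ha hb hab m' hlt
    refine ⟨m' + p * (a * b), lower ha hb m' p x0 y0 hxy, ?_⟩
    push_cast
    rw [hm']
    ring
  · -- p*a*b ≤ x
    have hx0 : (0 : ℤ) ≤ x := le_trans (by positivity) hcase
    set xn : ℕ := x.toNat with hxndef
    have hxn : (xn : ℤ) = x := by rw [hxndef]; exact Int.toNat_of_nonneg hx0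
    have hd : ¬ p < numRep2 a b xn := fun h => hx xn h hxn
    have hple : p * (a * b) ≤ xn := by
      have : ((p * (a * b) : ℕ) : ℤ) ≤ (xn : ℤ) := by push_cast; rw [hxn]; linarith
      exact_mod_cast this
    set x' : ℕ := xn - p * (a * b) with hx'def
    have hx' : x' + p * (a * b) = xn := by rw [hx'def]; exact Nat.sub_add_cancel hple
    have hnrep : ¬∃ u v, a * u + b * v = x' := by
      rintro ⟨u, v, huv⟩
      have := lower ha hb x' p u v huv
      rw [hx'] at this
      exact hd this
    obtain ⟨m0, ⟨x0, y0, hxy⟩, heq⟩ := sylvester ha hb hab x' hnrep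
    refine ⟨m0 + p * (a * b), lower ha hb m0 p x0 y0 hxy, ?_⟩
    have heqZ : (m0 : ℤ) + x' + a + b = a * b := by exact_mod_cast heq
    have hx'Z : (x' : ℤ) + (p : ℤ) * (a * b) = x := by
      rw [← hxn]; exact_mod_cast hx'
    have hm0 : (m0 : ℤ) = a * b - a - b - x' := by linarith
    have hxv : (x' : ℤ) = x - (p : ℤ) * (a * b) := by linarith
    push_cast
    rw [hm0, hxv]
    ring
end

section
/- Let A = {a_1,...,a_k} with gcd 1, a_1 = min(A), p ≥ 0, and m_i^{(p)} as in the p-Apéry set. Then the sum of all non-negative integers not in S_p(A) equals (1/(2a_1))·Σ_i (m_i^{(p)})² − (1/2)·Σ_i m_i^{(p)} + (a_1² − 1)/12. -/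
noncomputable def numRep (k : ℕ) (a : Fin k → ℕ) (n : ℕ) : ℕ :=
  Set.ncard {x : Fin k → ℕ | ∑ i, a i * x i = n}

def Sp (k p : ℕ) (a : Fin k → ℕ) : Set ℕ := {n : ℕ | p < numRep k a n}

lemma repSet_finite_s16 (k : ℕ) (a : Fin k → ℕ) (ha : ∀ i, 0 < a i) (n : ℕ) :
    {x : Fin k → ℕ | ∑ i, a i * x i = n}.Finite := by
  apply Set.Finite.subset (Set.Finite.pi (fun i : Fin k => Set.finite_Iic n))
  intro x hx
  simp only [Set.mem_setOf_eq] at hx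
  simp only [Set.mem_pi, Set.mem_univ, Set.mem_Iic, forall_true_left]
  intro i
  calc x i ≤ a i * x i := Nat.le_mul_of_pos_left _ (ha i)
    _ ≤ ∑ j, a j * x j := Finset.single_le_sum (f := fun j => a j * x j) (fun j _ => Nat.zero_le _) (Finset.mem_univ i)
    _ = n := hx

lemma numRep_le (k : ℕ) (a : Fin (k+1) → ℕ) (ha : ∀ i, 0 < a i) (n : ℕ) :
    numRep (k+1) a n ≤ numRep (k+1) a (n + a 0) := by
  apply Set.ncard_le_ncard_of_injOn (fun x => Function.update x 0 (x 0 + 1)) ?_ ?_ (repSet_finite_s16 _ a ha _)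
  · intro x hx
    simp only [Set.mem_setOf_eq] at hx ⊢
    have h : ∀ i, a i * Function.update x 0 (x 0 + 1) i
        = a i * x i + if i = 0 then a 0 else 0 := by
      intro i
      rcases eq_or_ne i 0 with h | h
      · subst h; simp [Function.update_self]; ring
      · simp [Function.update_of_ne h, h]
    simp only [h, Finset.sum_add_distrib, hx, Finset.sum_ite_eq', Finset.mem_univ, if_true]
  · intro x _ y _ hxy
    funext i
    rcases eq_or_ne i 0 with h | h
    · subst h
      have := congrFun hxy 0
      simpa using this
    · have := congrFun hxy i
      simpa [Function.update_of_ne h] using this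

lemma Sp_add (k p : ℕ) (a : Fin (k+1) → ℕ) (ha : ∀ i, 0 < a i) (n : ℕ)
    (hn : n ∈ Sp (k+1) p a) : n + a 0 ∈ Sp (k+1) p a :=
  lt_of_lt_of_le hn (numRep_le k a ha n)

lemma Sp_char (k p : ℕ) (a : Fin (k+1) → ℕ) (m : ℕ → ℕ) (ha : ∀ i, 0 < a i)
    (hm : ∀ i < a 0, IsLeast {n ∈ Sp (k + 1) p a | n % a 0 = i} (m i)) (n : ℕ) :
    n ∉ Sp (k+1) p a ↔ n < m (n % a 0) := by
  have hi : n % a 0 < a 0 := Nat.mod_lt _ (ha 0)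
  constructor
  · intro hn
    by_contra hlt
    push_neg at hlt
    -- m (n % a 0) ≤ n, same residue, so n ∈ Sp
    apply hn
    have hmod : m (n % a 0) % a 0 = n % a 0 := (hm _ hi).1.2
    have hdvd : a 0 ∣ n - m (n % a 0) := by
      have : m (n % a 0) ≡ n [MOD a 0] := by
        unfold Nat.ModEq
        rw [hmod]
      exact (Nat.modEq_iff_dvd' hlt).mp this
    obtain ⟨t, ht⟩ := hdvd
    have hn' : n = m (n % a 0) + a 0 * t := by omega
    rw [hn']
    clear hn' ht hlt
    induction t with
    | zero => simpa using (hm _ hi).1.1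
    | succ s ih =>
      have : m (n % a 0) + a 0 * (s + 1) = (m (n % a 0) + a 0 * s) + a 0 := by ring
      rw [this]
      exact Sp_add k p a ha _ ih
  · intro hlt hn
    exact absurd ((hm _ hi).2 ⟨hn, rfl⟩) (by omega)

lemma gauss1 (q : ℕ) : 2 * ∑ t ∈ Finset.range q, (t : ℤ) = q * (q - 1) := by
  induction q with
  | zero => simp
  | succ s ih =>
    rw [Finset.sum_range_succ]
    push_cast
    push_cast at ih
    linear_combination ih

lemma gauss2 (q : ℕ) : 6 * ∑ t ∈ Finset.range q, (t : ℤ) ^ 2 = q * (q - 1) * (2 * q - 1) := by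
  induction q with
  | zero => simp
  | succ s ih =>
    rw [Finset.sum_range_succ]
    push_cast
    push_cast at ih
    linear_combination ih

theorem stmt_16 (k p : ℕ) (a : Fin (k + 1) → ℕ) (m : ℕ → ℕ)
    (ha : ∀ i, 0 < a i) (hgcd : Finset.univ.gcd a = 1)
    (hmin : ∀ i, a 0 ≤ a i)
    (hm : ∀ i < a 0, IsLeast {n ∈ Sp (k + 1) p a | n % a 0 = i} (m i)) :
    12 * (a 0 : ℤ) * (∑ᶠ n ∈ {n : ℕ | n ∉ Sp (k + 1) p a}, (n : ℤ)) =
      6 * ∑ i ∈ Finset.range (a 0), (m i : ℤ) ^ 2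
        - 6 * (a 0 : ℤ) * ∑ i ∈ Finset.range (a 0), (m i : ℤ)
        + (a 0 : ℤ) * ((a 0 : ℤ) ^ 2 - 1) := by
  have ha0 : 0 < a 0 := ha 0
  set a0 := a 0 with ha0def
  set q : ℕ → ℕ := fun i => m i / a0 with hq
  have hmod : ∀ i < a0, m i % a0 = i := fun i hi => (hm i hi).1.2
  have hmq : ∀ i < a0, m i = i + a0 * q i := by
    intro i hi
    have h1 := Nat.div_add_mod (m i) a0
    rw [hmod i hi] at h1
    simp only [hq]
    omega
  -- the finset of gaps
  set T : Finset ℕ := (Finset.range a0).biUnion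
      (fun i => (Finset.range (q i)).image (fun t => i + a0 * t)) with hT
  have hSeq : {n : ℕ | n ∉ Sp (k + 1) p a} = ↑T := by
    ext n
    rw [Set.mem_setOf_eq, Finset.mem_coe, Sp_char k p a m ha hm n, hT]
    simp only [Finset.mem_biUnion, Finset.mem_image, Finset.mem_range]
    constructor
    · intro hlt
      rw [← ha0def] at hlt
      refine ⟨n % a0, Nat.mod_lt _ ha0, n / a0, ?_, ?_⟩
      · have h1 := hmq _ (Nat.mod_lt (y := a0) n ha0)
        have h2 := Nat.div_add_mod n a0
        have h3 : a0 * (n / a0) < a0 * q (n % a0) := by omega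
        exact Nat.lt_of_mul_lt_mul_left h3
      · have h2 := Nat.div_add_mod n a0
        omega
    · rintro ⟨i, hi, t, htq, rfl⟩
      have hni : (i + a0 * t) % a0 = i := by
        rw [Nat.add_mul_mod_self_left, Nat.mod_eq_of_lt hi]
      rw [hni]
      have h1 := hmq i hi
      have h3 : a0 * t < a0 * q i := mul_lt_mul_of_pos_left htq ha0
      omega
  rw [hSeq, finsum_mem_coe_finset]
  rw [Finset.sum_biUnion ?disj]
  case disj =>
    intro i hi j hj hij
    simp only [Finset.coe_range, Set.mem_Iio] at hi hj
    simp only [Function.onFun]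
    refine Finset.disjoint_left.mpr ?_
    intro x hx hx'
    simp only [Finset.mem_image, Finset.mem_range] at hx hx'
    obtain ⟨t, _, rfl⟩ := hx
    obtain ⟨t', _, he⟩ := hx'
    apply hij
    have e1 : (i + a0 * t) % a0 = i := by
      rw [Nat.add_mul_mod_self_left, Nat.mod_eq_of_lt hi]
    have e2 : (j + a0 * t') % a0 = j := by
      rw [Nat.add_mul_mod_self_left, Nat.mod_eq_of_lt hj]
    rw [← e1, ← e2, he]
  rw [Finset.mul_sum]
  have hinner : ∀ i ∈ Finset.range a0,
      12 * (a0 : ℤ) * ∑ n ∈ (Finset.range (q i)).image (fun t => i + a0 * t), (n : ℤ)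
        = 12 * a0 * (q i) * i + 6 * (a0:ℤ)^2 * (((q i):ℤ)^2 - q i) := by
    intro i hi
    rw [Finset.sum_image (fun x _ y _ h =>
      Nat.eq_of_mul_eq_mul_left ha0 (show a0 * x = a0 * y by omega))]
    have hexp : ∑ t ∈ Finset.range (q i), ((i + a0 * t : ℕ) : ℤ)
        = (q i : ℤ) * i + a0 * ∑ t ∈ Finset.range (q i), (t : ℤ) := by
      rw [Finset.sum_congr rfl
        (fun t _ => by push_cast; ring :
          ∀ t ∈ Finset.range (q i), ((i + a0 * t : ℕ) : ℤ) = (i:ℤ) + a0 * t),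
        Finset.sum_add_distrib, Finset.sum_const, ← Finset.mul_sum]
      simp only [Finset.card_range, nsmul_eq_mul]
    rw [hexp]
    linear_combination 6 * (a0:ℤ)^2 * gauss1 (q i)
  rw [Finset.sum_congr rfl hinner]
  have hcast : ∀ i ∈ Finset.range a0, (m i : ℤ) = (i:ℤ) + a0 * q i := by
    intro i hi
    rw [hmq i (Finset.mem_range.mp hi)]
    push_cast; ring
  rw [show ∑ i ∈ Finset.range a0, (m i : ℤ)^2 = ∑ i ∈ Finset.range a0, ((i:ℤ) + a0 * q i)^2
      from Finset.sum_congr rfl (fun i hi => by rw [hcast i hi]),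
    show ∑ i ∈ Finset.range a0, (m i : ℤ) = ∑ i ∈ Finset.range a0, ((i:ℤ) + a0 * q i)
      from Finset.sum_congr rfl (fun i hi => by rw [hcast i hi])]
  have key : ∑ i ∈ Finset.range a0,
      ((12 * (a0:ℤ) * q i * i + 6 * (a0:ℤ)^2 * (((q i):ℤ)^2 - q i))
        - (6 * ((i:ℤ) + a0 * q i)^2 - 6 * a0 * ((i:ℤ) + a0 * q i)))
      = (a0:ℤ)^3 - a0 := by
    rw [Finset.sum_congr rfl
      (fun i _ => by ring :
        ∀ i ∈ Finset.range a0,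
          (12 * (a0:ℤ) * q i * i + 6 * (a0:ℤ)^2 * (((q i):ℤ)^2 - q i))
            - (6 * ((i:ℤ) + a0 * q i)^2 - 6 * a0 * ((i:ℤ) + a0 * q i))
          = 6 * a0 * (i:ℤ) - 6 * (i:ℤ)^2),
      Finset.sum_sub_distrib, ← Finset.mul_sum, ← Finset.mul_sum]
    linear_combination 3 * (a0:ℤ) * gauss1 a0 - gauss2 a0
  rw [Finset.sum_sub_distrib] at key
  have hsplit : ∑ i ∈ Finset.range a0,
      (6 * ((i:ℤ) + a0 * q i)^2 - 6 * a0 * ((i:ℤ) + a0 * q i))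
      = 6 * ∑ i ∈ Finset.range a0, ((i:ℤ) + a0 * q i)^2
        - 6 * a0 * ∑ i ∈ Finset.range a0, ((i:ℤ) + a0 * q i) := by
    rw [Finset.sum_sub_distrib, ← Finset.mul_sum, ← Finset.mul_sum]
  rw [hsplit] at key
  linarith [key]
end
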